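/- Let d >= 1 and j >= 1, and expand ((1/2) PROD_{i=1}^d (1-t_i) + (1/2) PROD_{i=1}^d (1+t_i))^j = SUM_rho m_rho S_rho(t_1,...,t_d) in the Schur basis. If m_rho != 0, then rho_1 <= j (the Young diagram of rho has at most j columns, i.e., rho = (j^{s_1}, (j-1)^{s_2}, ..., 1^{s_j}) for some nonnegative integers s_1,...,s_j) and |rho| is even. -/

import Mathlib

/-- `lam : ℕ → ℕ` encodes a partition: weakly decreasing with finitely many nonzero parts. -/
def IsPartitionFun (lam : ℕ → ℕ) : Prop :=
  Antitone lam ∧ ∃ N : ℕ, ∀ i, N ≤ i → lam i = 0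

/-- `lam` encodes a partition with at most `d` (nonzero) parts. -/
def IsPartitionLe (d : ℕ) (lam : ℕ → ℕ) : Prop :=
  Antitone lam ∧ ∀ i, d ≤ i → lam i = 0

/-- The Schur function `S_lam(t_1, …, t_d)` as a multivariate formal power series: the
coefficient of a monomial is the number of semistandard Young tableaux of shape `lam` with
entries in `{0, …, d-1}` and the given content (entries weakly increase along rows and
strictly increase down columns). -/
noncomputable def schurFun (d : ℕ) (lam : ℕ → ℕ) : MvPowerSeries (Fin d) ℚ :=
  fun m => (Nat.card {T : ℕ → ℕ → ℕ //
    (∀ i j j', j ≤ j' → j' < lam i → T i j ≤ T i j') ∧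
    (∀ i i' j, i < i' → j < lam i' → T i j < T i' j) ∧
    (∀ i j, j < lam i → T i j < d) ∧
    (∀ i j, ¬ j < lam i → T i j = 0) ∧
    (∀ v : Fin d, Nat.card {c : ℕ × ℕ // c.2 < lam c.1 ∧ T c.1 c.2 = (v : ℕ)} = m v)} : ℚ)

/-- `g = ∑_λ c_λ S_λ(t_1,…,t_d)`, the sum running over partitions `λ` with at most `d`
parts; since the Schur functions are linearly independent, such an expansion of a symmetric
power series is unique. -/
def SchurExpansion (d : ℕ) (g : MvPowerSeries (Fin d) ℚ) (c : (ℕ → ℕ) → ℚ) : Prop :=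
  ∀ m : Fin d →₀ ℕ, MvPowerSeries.coeff (R := ℚ) m g =
    ∑ᶠ lam ∈ {lam : ℕ → ℕ | IsPartitionLe d lam},
      c lam * MvPowerSeries.coeff (R := ℚ) m (schurFun d lam)

/-!
The generating function `g = (½∏(1 - tᵢ) + ½∏(1 + tᵢ))ʲ` is invariant under `t ↦ -t`, so only
monomials of even degree occur in it, and it is a polynomial of degree at most `j` in each
variable. Against this, the Schur functions are unitriangular in the monomial basis: in a tableau
of shape `μ` the entries of row `i` are at least `i`, so if `t^λ` occurs in `S_μ` then
`|μ| = |λ|`, `λ₁ ≤ μ₁` (all zeros sit in the first row) and `n(μ) < n(λ)` unless `μ = λ`,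
where `n(λ) = ∑ (i - 1) λᵢ` (`rowWeight`); and `t^λ` occurs in `S_λ` exactly once.
Comparing coefficients of `t^λ`, induction on `n(λ)` shows `m_λ = 0` whenever `λ₁ > j` or `|λ|`
is odd: both conditions pass from `λ` to every `μ ≠ λ` contributing to that coefficient.
-/

open Finset

theorem Finset.sum_eq_sum_range_mul_card {α : Type*} {s : Finset α} {f : α → ℕ} {n : ℕ}
    (hf : ∀ a ∈ s, f a < n) : ∑ a ∈ s, f a = ∑ v ∈ range n, v * #{a ∈ s | f a = v} := by
  rw [← sum_fiberwise_of_maps_to (g := f) (t := range n) fun a ha => mem_range.mpr (hf a ha)]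
  refine sum_congr rfl fun v _ => ?_
  rw [sum_congr rfl fun a ha => (mem_filter.mp ha).2, sum_const, smul_eq_mul, mul_comm]

namespace MvPowerSeries
variable {σ R : Type*} [CommRing R]

theorem coeff_rescale_neg_one (f : MvPowerSeries σ R) (m : σ →₀ ℕ) :
    coeff m (rescale (-1) f) = (-1) ^ m.degree * coeff m f := by
  rw [coeff_rescale, Finsupp.degree_apply, Finsupp.prod, ← Finset.prod_pow_eq_pow_sum]
  rfl

theorem rescale_neg_one_C (r : R) : rescale (-1) (C r : MvPowerSeries σ R) = C r := by
  classical
  ext m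
  rw [coeff_rescale_neg_one, coeff_C]
  split_ifs with h <;> simp [h]

theorem rescale_neg_one_X (i : σ) : rescale (-1) (X i : MvPowerSeries σ R) = -X i := by
  classical
  ext m
  rw [coeff_rescale_neg_one, map_neg, coeff_X]
  split_ifs with h <;> simp [h]

theorem coeff_eq_zero_of_rescale_neg_one_eq [NoZeroDivisors R] [CharZero R]
    {f : MvPowerSeries σ R} (hf : rescale (-1) f = f) {m : σ →₀ ℕ} (hm : Odd m.degree) :
    coeff m f = 0 := by
  have h := coeff_rescale_neg_one f m
  rwa [hf, hm.neg_one_pow, neg_one_mul, eq_comm, CharZero.neg_eq_self_iff] at h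

end MvPowerSeries

namespace MvPolynomial
variable {σ R : Type*} [CommRing R]

theorem degreeOf_prod_one_add_C_mul_X_le [Fintype σ] [Nontrivial R] (a : R) (v : σ) :
    degreeOf v (∏ k, (1 + C a * X k)) ≤ 1 := by
  classical
  calc degreeOf v (∏ k, (1 + C a * X k))
      ≤ ∑ k, degreeOf v (1 + C a * X k : MvPolynomial σ R) := degreeOf_prod_le _ _ _
    _ ≤ ∑ k, if v = k then 1 else 0 := by
        gcongr with k
        refine (degreeOf_add_le _ _ _).trans (max_le (by simp) ?_)
        exact (degreeOf_C_mul_le _ _ _).trans (degreeOf_X v k).le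
    _ = 1 := by simp

end MvPolynomial

open MvPowerSeries

structure IsSSYT (d : ℕ) (lam : ℕ → ℕ) (T : ℕ → ℕ → ℕ) : Prop where
  row_weak : ∀ i j j', j ≤ j' → j' < lam i → T i j ≤ T i j'
  col_strict : ∀ i i' j, i < i' → j < lam i' → T i j < T i' j
  lt : ∀ i j, j < lam i → T i j < d
  eq_zero : ∀ i j, ¬ j < lam i → T i j = 0

noncomputable def entryCount (lam : ℕ → ℕ) (T : ℕ → ℕ → ℕ) (v : ℕ) : ℕ :=
  Nat.card {c : ℕ × ℕ // c.2 < lam c.1 ∧ T c.1 c.2 = v}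

def cells (d : ℕ) (lam : ℕ → ℕ) : Finset (ℕ × ℕ) :=
  {c ∈ range d ×ˢ range (lam 0) | c.2 < lam c.1}

def rowWeight (d : ℕ) (lam : ℕ → ℕ) : ℕ := ∑ i ∈ range d, i * lam i

noncomputable def exponentOf (d : ℕ) (lam : ℕ → ℕ) : Fin d →₀ ℕ :=
  Finsupp.equivFunOnFinite.symm fun v => lam v

variable {d : ℕ} {lam mu : ℕ → ℕ} {T : ℕ → ℕ → ℕ}

@[simp]
theorem exponentOf_apply (v : Fin d) : exponentOf d lam v = lam v := rfl

theorem degree_exponentOf : (exponentOf d lam).degree = ∑ i ∈ range d, lam i := by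
  rw [Finsupp.degree_eq_sum]
  exact Fin.sum_univ_eq_sum_range (fun i => lam i) d

theorem coeff_schurFun (m : Fin d →₀ ℕ) :
    coeff m (schurFun d lam) =
      Nat.card {T // IsSSYT d lam T ∧ ∀ v : Fin d, entryCount lam T v = m v} := by
  refine congrArg Nat.cast (Nat.card_congr (Equiv.subtypeEquivRight fun T => ?_))
  exact ⟨fun ⟨h₁, h₂, h₃, h₄, h₅⟩ => ⟨⟨h₁, h₂, h₃, h₄⟩, h₅⟩,
    fun ⟨⟨h₁, h₂, h₃, h₄⟩, h₅⟩ => ⟨h₁, h₂, h₃, h₄, h₅⟩⟩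

theorem fst_lt_of_mem_cells {c : ℕ × ℕ} (hc : c ∈ cells d lam) : c.1 < d :=
  mem_range.mp (mem_product.mp (mem_filter.mp hc).1).1

namespace IsPartitionLe

theorem mem_cells (hlam : IsPartitionLe d lam) {c : ℕ × ℕ} :
    c ∈ cells d lam ↔ c.2 < lam c.1 := by
  refine ⟨fun h => (mem_filter.mp h).2, fun h => mem_filter.mpr ⟨mem_product.mpr ⟨?_, ?_⟩, h⟩⟩
  · by_contra hc
    rw [mem_range, not_lt] at hc
    simp [hlam.2 _ hc] at h
  · exact mem_range.mpr (h.trans_le (hlam.1 (Nat.zero_le _)))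

theorem entryCount_eq_card (hlam : IsPartitionLe d lam) (T : ℕ → ℕ → ℕ) (v : ℕ) :
    entryCount lam T v = #{c ∈ cells d lam | T c.1 c.2 = v} := by
  rw [entryCount, ← Nat.card_eq_finsetCard]
  exact Nat.card_congr (Equiv.subtypeEquivRight fun c => by simp [hlam.mem_cells])

theorem card_cells_filter_fst (hlam : IsPartitionLe d lam) (i : ℕ) :
    #{c ∈ cells d lam | c.1 = i} = lam i := by
  have : {c ∈ cells d lam | c.1 = i} =
      (range (lam i)).map ⟨(i, ·), Prod.mk_right_injective i⟩ := by
    ext ⟨a, b⟩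
    simp only [mem_filter, hlam.mem_cells, mem_map, mem_range, Function.Embedding.coeFn_mk,
      Prod.mk.injEq]
    constructor
    · rintro ⟨hb, rfl⟩
      exact ⟨b, hb, rfl, rfl⟩
    · rintro ⟨b, hb, rfl, rfl⟩
      exact ⟨hb, rfl⟩
  rw [this, card_map, card_range]

theorem sum_cells_fst (hlam : IsPartitionLe d lam) :
    ∑ c ∈ cells d lam, c.1 = rowWeight d lam := by
  rw [Finset.sum_eq_sum_range_mul_card (n := d) fun c hc => ?_]
  · exact sum_congr rfl fun i _ => by rw [hlam.card_cells_filter_fst]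
  · exact fst_lt_of_mem_cells hc

end IsPartitionLe

namespace IsSSYT

theorem le_entry (hmu : Antitone mu) (hT : IsSSYT d mu T) {i j : ℕ} (hj : j < mu i) :
    i ≤ T i j := by
  induction i with
  | zero => exact Nat.zero_le _
  | succ i ih =>
    exact (ih (hj.trans_le (hmu i.le_succ))).trans_lt
      (hT.col_strict i (i + 1) j i.lt_succ_self hj)

theorem sum_cells_entry (hmu : IsPartitionLe d mu) (hT : IsSSYT d mu T)
    (hcont : ∀ v < d, entryCount mu T v = lam v) :
    ∑ c ∈ cells d mu, T c.1 c.2 = rowWeight d lam := by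
  rw [Finset.sum_eq_sum_range_mul_card (n := d) fun c hc => hT.lt _ _ (hmu.mem_cells.mp hc)]
  exact sum_congr rfl fun v hv => by rw [← hmu.entryCount_eq_card, hcont v (mem_range.mp hv)]

theorem sum_eq (hmu : IsPartitionLe d mu) (hT : IsSSYT d mu T)
    (hcont : ∀ v < d, entryCount mu T v = lam v) :
    ∑ i ∈ range d, lam i = ∑ i ∈ range d, mu i := calc
  _ = ∑ v ∈ range d, #{c ∈ cells d mu | T c.1 c.2 = v} :=
    sum_congr rfl fun v hv => by rw [← hmu.entryCount_eq_card, hcont v (mem_range.mp hv)]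
  _ = #(cells d mu) := (card_eq_sum_card_fiberwise fun c hc =>
    mem_range.mpr (hT.lt _ _ (hmu.mem_cells.mp hc))).symm
  _ = ∑ i ∈ range d, #{c ∈ cells d mu | c.1 = i} :=
    card_eq_sum_card_fiberwise fun c hc => mem_range.mpr (fst_lt_of_mem_cells hc)
  _ = ∑ i ∈ range d, mu i := sum_congr rfl fun i _ => hmu.card_cells_filter_fst i

theorem apply_zero_le (hmu : IsPartitionLe d mu) (hT : IsSSYT d mu T)
    (hcont : ∀ v < d, entryCount mu T v = lam v) (hlam : IsPartitionLe d lam) :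
    lam 0 ≤ mu 0 := by
  rcases Nat.eq_zero_or_pos d with rfl | hd
  · simp [hlam.2 0 le_rfl]
  rw [← hcont 0 hd, hmu.entryCount_eq_card, ← hmu.card_cells_filter_fst]
  refine card_le_card (monotone_filter_right _ fun c hc (h0 : T c.1 c.2 = 0) => ?_)
  simpa [h0] using hT.le_entry hmu.1 (hmu.mem_cells.mp hc)

theorem rowWeight_le (hmu : IsPartitionLe d mu) (hT : IsSSYT d mu T)
    (hcont : ∀ v < d, entryCount mu T v = lam v) : rowWeight d mu ≤ rowWeight d lam := by
  rw [← hmu.sum_cells_fst, ← hT.sum_cells_entry hmu hcont]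
  exact sum_le_sum fun c hc => hT.le_entry hmu.1 (hmu.mem_cells.mp hc)

theorem entry_eq_of_rowWeight_eq (hmu : IsPartitionLe d mu) (hT : IsSSYT d mu T)
    (hcont : ∀ v < d, entryCount mu T v = lam v) (h : rowWeight d lam = rowWeight d mu)
    {i j : ℕ} (hj : j < mu i) : T i j = i := by
  rw [← hmu.sum_cells_fst, ← hT.sum_cells_entry hmu hcont, eq_comm,
    sum_eq_sum_iff_of_le fun c hc => hT.le_entry hmu.1 (hmu.mem_cells.mp hc)] at h
  exact (h (i, j) (hmu.mem_cells.mpr hj)).symm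

end IsSSYT

def rowTableau (lam : ℕ → ℕ) (i j : ℕ) : ℕ := if j < lam i then i else 0

theorem IsPartitionLe.isSSYT_rowTableau (hlam : IsPartitionLe d lam) :
    IsSSYT d lam (rowTableau lam) where
  row_weak i j j' hj hj' := by simp [rowTableau, hj', hj.trans_lt hj']
  col_strict i i' j hi hj := by
    simp [rowTableau, hj, hj.trans_le (hlam.1 hi.le), hi]
  lt i j hj := by
    simpa [rowTableau, hj] using fst_lt_of_mem_cells ((hlam.mem_cells (c := (i, j))).mpr hj)
  eq_zero i j hj := by simp [rowTableau, hj]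

theorem IsPartitionLe.entryCount_rowTableau (hlam : IsPartitionLe d lam) (v : ℕ) :
    entryCount lam (rowTableau lam) v = lam v := by
  rw [hlam.entryCount_eq_card, ← hlam.card_cells_filter_fst v]
  exact congrArg card (filter_congr fun c hc => by simp [rowTableau, hlam.mem_cells.mp hc])

theorem exists_isSSYT_of_coeff_schurFun_ne_zero
    (h : coeff (exponentOf d lam) (schurFun d mu) ≠ 0) :
    ∃ T, IsSSYT d mu T ∧ ∀ v < d, entryCount mu T v = lam v := by
  rw [coeff_schurFun, Nat.cast_ne_zero, Nat.card_ne_zero] at h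
  obtain ⟨⟨T, hT, hcont⟩⟩ := h.1
  exact ⟨T, hT, fun v hv => hcont ⟨v, hv⟩⟩

theorem IsPartitionLe.coeff_schurFun_self (hlam : IsPartitionLe d lam) :
    coeff (exponentOf d lam) (schurFun d lam) = 1 := by
  rw [coeff_schurFun, Nat.cast_eq_one, Nat.card_eq_one_iff_exists]
  refine ⟨⟨rowTableau lam, hlam.isSSYT_rowTableau, fun v => by
    simp [hlam.entryCount_rowTableau]⟩, ?_⟩
  rintro ⟨T, hT, hcont⟩
  refine Subtype.ext (funext₂ fun i j => ?_)
  change T i j = rowTableau lam i j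
  by_cases hj : j < lam i
  · rw [hT.entry_eq_of_rowWeight_eq hlam (fun v hv => hcont ⟨v, hv⟩) rfl hj]
    simp [rowTableau, hj]
  · simp [hT.eq_zero i j hj, rowTableau, hj]

theorem rowWeight_lt_of_coeff_schurFun_ne_zero (hmu : IsPartitionLe d mu)
    (hlam : IsPartitionLe d lam) (hne : mu ≠ lam)
    (h : coeff (exponentOf d lam) (schurFun d mu) ≠ 0) : rowWeight d mu < rowWeight d lam := by
  obtain ⟨T, hT, hcont⟩ := exists_isSSYT_of_coeff_schurFun_ne_zero h
  refine (hT.rowWeight_le hmu hcont).lt_of_ne fun heq => hne (funext fun v => ?_)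
  rcases lt_or_ge v d with hv | hv
  · rw [← hcont v hv, hmu.entryCount_eq_card, ← hmu.card_cells_filter_fst v]
    exact congrArg card (filter_congr fun c hc => by
      rw [hT.entry_eq_of_rowWeight_eq hmu hcont heq.symm (hmu.mem_cells.mp hc)])
  · rw [hmu.2 v hv, hlam.2 v hv]

theorem SchurExpansion.apply_eq_zero_of_coeff_exponentOf_eq_zero
    {g : MvPowerSeries (Fin d) ℚ} {c : (ℕ → ℕ) → ℚ} (hc : SchurExpansion d g c)
    (B : (ℕ → ℕ) → Prop)
    (hB : ∀ lam mu, IsPartitionLe d lam → IsPartitionLe d mu → B lam →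
      coeff (exponentOf d lam) (schurFun d mu) ≠ 0 → B mu)
    (hg : ∀ lam, IsPartitionLe d lam → B lam → coeff (exponentOf d lam) g = 0)
    (hlam : IsPartitionLe d lam) (hBlam : B lam) : c lam = 0 := by
  induction hn : rowWeight d lam using Nat.strong_induction_on generalizing lam with
  | _ n ih =>
  have hterm : ∀ mu ≠ lam, {mu | IsPartitionLe d mu}.indicator
      (fun mu => c mu * coeff (exponentOf d lam) (schurFun d mu)) mu = 0 := by
    intro mu hne
    refine Set.indicator_apply_eq_zero.mpr fun hmu => ?_
    by_cases h : coeff (exponentOf d lam) (schurFun d mu) = 0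
    · rw [h, mul_zero]
    · rw [ih _ (hn ▸ rowWeight_lt_of_coeff_schurFun_ne_zero hmu hlam hne h) hmu
        (hB lam mu hlam hmu hBlam h) rfl, zero_mul]
  have hsum := hc (exponentOf d lam)
  rwa [hg lam hlam hBlam, finsum_mem_def, finsum_eq_single _ lam hterm,
    Set.indicator_of_mem (show lam ∈ {mu | IsPartitionLe d mu} from hlam),
    hlam.coeff_schurFun_self, mul_one, eq_comm] at hsum

noncomputable def halfProdSum (d : ℕ) : MvPowerSeries (Fin d) ℚ :=
  C (1 / 2) * ∏ i, (1 - X i) + C (1 / 2) * ∏ i, (1 + X i)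

theorem rescale_neg_one_halfProdSum : rescale (-1) (halfProdSum d) = halfProdSum d := by
  simp only [halfProdSum, map_add, map_mul, map_prod, map_sub, map_one, rescale_neg_one_C,
    rescale_neg_one_X, sub_neg_eq_add, ← sub_eq_add_neg]
  exact add_comm _ _

theorem coeff_halfProdSum_pow_eq_zero_of_odd (j : ℕ) {m : Fin d →₀ ℕ} (hm : Odd m.degree) :
    coeff m (halfProdSum d ^ j) = 0 :=
  coeff_eq_zero_of_rescale_neg_one_eq (by rw [map_pow, rescale_neg_one_halfProdSum]) hm

-- Both products are written as in `MvPolynomial.degreeOf_prod_one_add_C_mul_X_le`.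
theorem halfProdSum_eq_coe : halfProdSum d =
    ((MvPolynomial.C (1 / 2) * ∏ i, (1 + MvPolynomial.C (-1) * MvPolynomial.X i) +
      MvPolynomial.C (1 / 2) * ∏ i, (1 + MvPolynomial.C 1 * MvPolynomial.X i) :
        MvPolynomial (Fin d) ℚ) : MvPowerSeries (Fin d) ℚ) := by
  rw [← MvPolynomial.coeToMvPowerSeries.ringHom_apply]
  simp only [halfProdSum, map_add, map_sub, map_mul, map_prod, map_one, map_neg,
    MvPolynomial.coeToMvPowerSeries.ringHom_apply, MvPolynomial.coe_C, MvPolynomial.coe_X,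
    neg_one_mul, one_mul, ← sub_eq_add_neg]

theorem coeff_halfProdSum_pow_eq_zero_of_lt {j : ℕ} {m : Fin d →₀ ℕ} {v : Fin d} (h : j < m v) :
    coeff m (halfProdSum d ^ j) = 0 := by
  rw [halfProdSum_eq_coe, ← MvPolynomial.coe_pow, MvPolynomial.coeff_coe,
    ← MvPolynomial.notMem_support_iff]
  refine MvPolynomial.notMem_support_of_degreeOf_lt v (lt_of_le_of_lt ?_ h)
  refine (MvPolynomial.degreeOf_pow_le _ _ _).trans (mul_le_of_le_one_right' ?_)
  refine (MvPolynomial.degreeOf_add_le _ _ _).trans (max_le ?_ ?_) <;>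
    exact (MvPolynomial.degreeOf_C_mul_le _ _ _).trans
      (MvPolynomial.degreeOf_prod_one_add_C_mul_X_le _ _)

theorem schur_support_of_pow_half_prod_general
    (d j : ℕ) (c : (ℕ → ℕ) → ℚ)
    (hc : SchurExpansion d
      ((MvPowerSeries.C (σ := Fin d) (R := ℚ) (1/2) * ∏ i : Fin d, (1 - MvPowerSeries.X i)
        + MvPowerSeries.C (σ := Fin d) (R := ℚ) (1/2) * ∏ i : Fin d, (1 + MvPowerSeries.X i)) ^ j) c)
    (lam : ℕ → ℕ) (hlam : IsPartitionLe d lam) (hne : c lam ≠ 0) :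
    lam 0 ≤ j ∧ Even (∑ i ∈ Finset.range d, lam i) := by
  have hc' : SchurExpansion d (halfProdSum d ^ j) c := hc
  by_contra hbad
  refine hne (hc'.apply_eq_zero_of_coeff_exponentOf_eq_zero
    (fun mu => j < mu 0 ∨ ¬ Even (∑ i ∈ range d, mu i)) ?_ ?_ hlam
    (by rwa [not_and_or, not_le] at hbad))
  · intro nu mu hnu hmu hnu_bad h
    obtain ⟨T, hT, hcont⟩ := exists_isSSYT_of_coeff_schurFun_ne_zero h
    rw [← hT.sum_eq hmu hcont]
    exact hnu_bad.imp_left (·.trans_le (hT.apply_zero_le hmu hcont hnu))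
  · rintro nu hnu (hlarge | hodd)
    · have hd : 0 < d := Nat.pos_of_ne_zero fun hd => by simp [hnu.2 0 hd.le] at hlarge
      exact coeff_halfProdSum_pow_eq_zero_of_lt (v := ⟨0, hd⟩) hlarge
    · exact coeff_halfProdSum_pow_eq_zero_of_odd j
        (by rwa [degree_exponentOf, ← Nat.not_even_iff_odd])

/-- If `((1/2)∏(1-t_i) + (1/2)∏(1+t_i))^j = ∑_ρ m_ρ S_ρ(t_1,…,t_d)` and `m_ρ ≠ 0`, then `ρ`
has at most `j` columns (`ρ_1 ≤ j`) and `|ρ|` is even. -/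
theorem schur_support_of_pow_half_prod
    (d j : ℕ) (hd : 1 ≤ d) (hj : 1 ≤ j) (c : (ℕ → ℕ) → ℚ)
    (hc : SchurExpansion d
      ((MvPowerSeries.C (σ := Fin d) (R := ℚ) (1/2) * ∏ i : Fin d, (1 - MvPowerSeries.X i)
        + MvPowerSeries.C (σ := Fin d) (R := ℚ) (1/2) * ∏ i : Fin d, (1 + MvPowerSeries.X i)) ^ j) c)
    (lam : ℕ → ℕ) (hlam : IsPartitionLe d lam) (hne : c lam ≠ 0) :
    lam 0 ≤ j ∧ Even (∑ i ∈ Finset.range d, lam i) :=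
  schur_support_of_pow_half_prod_general d j c hc lam hlam hne
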